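/- arXiv:2005.13608 — 3 statements merged into one kernel-verified Lean document; each statement's English description precedes it below -/
import Mathlib

section
/- If f = (V0, V1, V2) is a total Roman dominating function of minimum weight on a graph G without isolated vertices, then the weight γ_tR(G) satisfies γ_tR(G) ≥ |V(G)| − (Δ(G) − 2)·|V2|. -/
open Finset

/-- A total Roman dominating function: labels in {0,1,2}, every 0-labeled vertex has a
2-labeled neighbor, and positive-labeled vertices induce a subgraph with no isolated vertex. -/
def IsTRDF {V : Type*} (G : SimpleGraph V) (f : V → ℕ) : Prop :=
  (∀ v, f v ≤ 2) ∧
  (∀ v, f v = 0 → ∃ u, G.Adj v u ∧ f u = 2) ∧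
  (∀ v, 0 < f v → ∃ u, G.Adj v u ∧ 0 < f u)

/-- The total Roman domination number. -/
noncomputable def trdn {V : Type*} (G : SimpleGraph V) [Fintype V] : ℕ :=
  sInf {w | ∃ f : V → ℕ, IsTRDF G f ∧ ∑ v, f v = w}

/-- A total dominating set. -/
def IsTotalDomSet {V : Type*} (G : SimpleGraph V) (D : Set V) : Prop :=
  ∀ v, ∃ u ∈ D, G.Adj v u

/-- The total domination number. -/
noncomputable def tdn {V : Type*} (G : SimpleGraph V) [Fintype V] : ℕ :=
  sInf {n | ∃ D : Finset V, IsTotalDomSet G ↑D ∧ D.card = n}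

/-- A packing: pairwise disjoint closed neighborhoods. -/
def IsPacking {V : Type*} (G : SimpleGraph V) (S : Set V) : Prop :=
  ∀ u ∈ S, ∀ v ∈ S, u ≠ v →
    Disjoint (insert u (G.neighborSet u)) (insert v (G.neighborSet v))

/-- The packing number. -/
noncomputable def packingNumber {V : Type*} (G : SimpleGraph V) [Fintype V] : ℕ :=
  sSup {n | ∃ S : Finset V, IsPacking G ↑S ∧ S.card = n}

/-- An open packing: pairwise disjoint open neighborhoods. -/
def IsOpenPacking {V : Type*} (G : SimpleGraph V) (S : Set V) : Prop :=
  ∀ u ∈ S, ∀ v ∈ S, u ≠ v → Disjoint (G.neighborSet u) (G.neighborSet v)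

/-- The open packing number. -/
noncomputable def openPackingNumber {V : Type*} (G : SimpleGraph V) [Fintype V] : ℕ :=
  sSup {n | ∃ S : Finset V, IsOpenPacking G ↑S ∧ S.card = n}

/-- The direct (tensor) product of two simple graphs. -/
def dirProd {V W : Type*} (G : SimpleGraph V) (H : SimpleGraph W) : SimpleGraph (V × W) where
  Adj p q := G.Adj p.1 q.1 ∧ H.Adj p.2 q.2
  symm := ⟨fun p q h => ⟨h.1.symm, h.2.symm⟩⟩
  loopless := ⟨fun p h => G.loopless.irrefl p.1 h.1⟩

/-- A graph with no isolated vertices. -/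
def NoIsolated {V : Type*} (G : SimpleGraph V) : Prop := ∀ v, ∃ u, G.Adj v u

/- Each vertex of V₀ has a neighbour in V₂, while each vertex of V₂ has a neighbour outside V₀
and hence at most Δ - 1 neighbours in V₀. Double counting gives |V₀| ≤ (Δ - 1)|V₂|, and
w(f) = |V₁| + 2|V₂| = |V| - |V₀| + |V₂| turns this into the bound. -/

namespace SimpleGraph

variable {V : Type*} [Fintype V] (G : SimpleGraph V) [DecidableRel G.Adj]

theorem card_filter_adj_lt_maxDegree {S : Finset V} {u v : V} (huv : G.Adj v u) (hu : u ∉ S) :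
    #{w ∈ S | G.Adj w v} < G.maxDegree := by
  classical
  have hsub : insert u {w ∈ S | G.Adj w v} ⊆ G.neighborFinset v := by
    intro w hw
    rcases mem_insert.1 hw with rfl | hw
    · exact (G.mem_neighborFinset _ _).2 huv
    · exact (G.mem_neighborFinset _ _).2 (mem_filter.1 hw).2.symm
  calc #{w ∈ S | G.Adj w v}
      < #(insert u {w ∈ S | G.Adj w v}) :=
        card_lt_card (ssubset_insert fun h => hu (mem_filter.1 h).1)
    _ ≤ G.degree v := (card_le_card hsub).trans_eq (G.card_neighborFinset_eq_degree v)
    _ ≤ G.maxDegree := G.degree_le_maxDegree v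

end SimpleGraph

theorem sum_add_card_filter_eq_zero {V : Type*} [Fintype V] {f : V → ℕ} (hf : ∀ v, f v ≤ 2) :
    ∑ v, f v + #{v | f v = 0} = Fintype.card V + #{v | f v = 2} := by
  rw [card_filter, card_filter, Fintype.card, card_eq_sum_ones, ← sum_add_distrib,
    ← sum_add_distrib]
  refine sum_congr rfl fun v _ => ?_
  have := hf v
  interval_cases f v <;> rfl

theorem IsTRDF.card_filter_eq_zero_le {V : Type*} [Fintype V] {G : SimpleGraph V}
    [DecidableRel G.Adj] {f : V → ℕ} (hf : IsTRDF G f) :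
    (#{v | f v = 0} : ℤ) ≤ #{v | f v = 2} * ((G.maxDegree : ℤ) - 1) := by
  have hzero : ∀ a ∈ ({v | f v = 0} : Finset V),
      (1 : ℤ) ≤ #(bipartiteAbove G.Adj {v | f v = 2} a) := by
    intro a ha
    obtain ⟨b, hab, hb⟩ := hf.2.1 a (mem_filter.1 ha).2
    exact_mod_cast card_pos.2 ⟨b, (mem_bipartiteAbove _).2 ⟨mem_filter.2 ⟨mem_univ b, hb⟩, hab⟩⟩
  have htwo : ∀ b ∈ ({v | f v = 2} : Finset V),
      (#(bipartiteBelow G.Adj {v | f v = 0} b) : ℤ) ≤ G.maxDegree - 1 := by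
    intro b hb
    obtain ⟨u, hbu, hu⟩ := hf.2.2 b ((mem_filter.1 hb).2 ▸ two_pos)
    have := G.card_filter_adj_lt_maxDegree hbu (S := {v | f v = 0}) (by simp [hu.ne'])
    rw [bipartiteBelow]
    omega
  simpa using card_nsmul_le_card_nsmul _ hzero htwo

theorem stmt_0_general {V : Type*} [Fintype V] (G : SimpleGraph V)
    [DecidableRel G.Adj] (f : V → ℕ)
    (hf : IsTRDF G f) (hmin : ∑ v, f v = trdn G) :
    (trdn G : ℤ) ≥ (Fintype.card V : ℤ) -
      ((G.maxDegree : ℤ) - 2) * ((Finset.univ.filter (fun v => f v = 2)).card : ℤ) := by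
  have hweight : ((∑ v, f v : ℕ) : ℤ) + #{v | f v = 0} = Fintype.card V + #{v | f v = 2} :=
    mod_cast sum_add_card_filter_eq_zero hf.1
  have hzero := hf.card_filter_eq_zero_le
  rw [← hmin]
  linarith

theorem stmt_0 {V : Type*} [Fintype V] [DecidableEq V] (G : SimpleGraph V)
    [DecidableRel G.Adj] (hG : NoIsolated G) (f : V → ℕ)
    (hf : IsTRDF G f) (hmin : ∑ v, f v = trdn G) :
    (trdn G : ℤ) ≥ (Fintype.card V : ℤ) -
      ((G.maxDegree : ℤ) - 2) * ((Finset.univ.filter (fun v => f v = 2)).card : ℤ) :=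
  stmt_0_general G f hf hmin
end

section
/- If D is an efficient open dominating set of a graph G, then D is a minimum total dominating set of G, i.e., |D| = γ_t(G). -/
open Finset

section

variable {V : Type*} {G : SimpleGraph V}

/-- Sending each vertex of the open packing to one of its neighbours in the total dominating set
is injective, since no vertex lies in two open neighbourhoods of the packing. -/
theorem IsOpenPacking.card_le_card_of_isTotalDomSet {S D : Finset V} (hS : IsOpenPacking G ↑S)
    (hD : IsTotalDomSet G ↑D) : S.card ≤ D.card := by
  choose f hfD hfadj using hD
  refine card_le_card_of_injOn f (fun u _ => hfD u) fun u hu v hv hfuv => ?_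
  by_contra hne
  have hfv : f u ∈ G.neighborSet v := hfuv ▸ hfadj v
  exact Set.disjoint_left.mp (hS u hu v hv hne) (hfadj u) hfv

theorem tdn_le_card [Fintype V] {D : Finset V} (hD : IsTotalDomSet G ↑D) : tdn G ≤ D.card :=
  Nat.sInf_le ⟨D, hD, rfl⟩

theorem exists_isTotalDomSet_card_eq_tdn [Fintype V] {D : Finset V} (hD : IsTotalDomSet G ↑D) :
    ∃ D' : Finset V, IsTotalDomSet G ↑D' ∧ D'.card = tdn G :=
  Nat.sInf_mem (s := {n | ∃ D : Finset V, IsTotalDomSet G ↑D ∧ D.card = n}) ⟨D.card, D, hD, rfl⟩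

end

theorem stmt_4 {V : Type*} [Fintype V] (G : SimpleGraph V) (D : Finset V)
    (hD : IsTotalDomSet G ↑D) (hop : IsOpenPacking G ↑D) :
    D.card = tdn G := by
  obtain ⟨D', hD', hD'card⟩ := exists_isTotalDomSet_card_eq_tdn hD
  exact le_antisymm (hD'card ▸ hop.card_le_card_of_isTotalDomSet hD') (tdn_le_card hD)
end

section
/- Let G and H be graphs without isolated vertices, let g = (A0,A1,A2) be a total Roman dominating function on G and h = (B0,B1,B2) be a total Roman dominating function on H. Then γ_tR(G × H) ≤ ω(g)·ω(h) − 2·|A2|·|B2|, where ω denotes weight. -/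
open Finset

/-!
Label the vertex `(u, v)` of `G × H` by `min (g u * h v) 2`. Every vertex of a graph carrying a
total Roman dominating function has a neighbour with positive label, and a zero-labelled one has a
neighbour labelled `2`; pairing such neighbours coordinatewise shows the product labelling is again
a total Roman dominating function. Its weight is `∑ g * ∑ h` minus `2` for each pair of
`2`-labelled vertices, since `min (a * b) 2 = a * b` for labels `a, b ≤ 2` except at `a = b = 2`.
-/

namespace IsTRDF

variable {V W : Type*} {G : SimpleGraph V} {H : SimpleGraph W} {g : V → ℕ} {h : W → ℕ}

theorem exists_adj_pos (hg : IsTRDF G g) (u : V) : ∃ u', G.Adj u u' ∧ 0 < g u' := by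
  rcases Nat.eq_zero_or_pos (g u) with hu | hu
  · obtain ⟨u', hadj, hu'⟩ := hg.2.1 u hu
    exact ⟨u', hadj, by omega⟩
  · exact hg.2.2 u hu

theorem dirProd (hg : IsTRDF G g) (hh : IsTRDF H h) :
    IsTRDF (dirProd G H) fun p => min (g p.1 * h p.2) 2 := by
  refine ⟨fun _ => min_le_right _ _, ?_, ?_⟩
  · rintro ⟨u, v⟩ hzero
    have huv : g u * h v = 0 := by simpa using hzero
    obtain ⟨u', v', hu', hv', htwo⟩ :
        ∃ u' v', G.Adj u u' ∧ H.Adj v v' ∧ 2 ≤ g u' * h v' := by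
      rcases Nat.mul_eq_zero.mp huv with hu | hv
      · obtain ⟨u', hu', hgu'⟩ := hg.2.1 u hu
        obtain ⟨v', hv', hhv'⟩ := hh.exists_adj_pos v
        exact ⟨u', v', hu', hv', by rw [hgu']; omega⟩
      · obtain ⟨u', hu', hgu'⟩ := hg.exists_adj_pos u
        obtain ⟨v', hv', hhv'⟩ := hh.2.1 v hv
        exact ⟨u', v', hu', hv', by rw [hhv']; omega⟩
    exact ⟨(u', v'), ⟨hu', hv'⟩, min_eq_right htwo⟩
  · rintro ⟨u, v⟩ -
    obtain ⟨u', hu', hgu'⟩ := hg.exists_adj_pos u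
    obtain ⟨v', hv', hhv'⟩ := hh.exists_adj_pos v
    exact ⟨(u', v'), ⟨hu', hv'⟩, lt_min (Nat.mul_pos hgu' hhv') two_pos⟩

end IsTRDF

theorem IsTRDF.trdn_le_sum {V : Type*} [Fintype V] {G : SimpleGraph V} {f : V → ℕ}
    (hf : IsTRDF G f) : trdn G ≤ ∑ v, f v :=
  Nat.sInf_le ⟨f, hf, rfl⟩

theorem min_mul_two_add_eq_mul {a b : ℕ} (ha : a ≤ 2) (hb : b ≤ 2) :
    min (a * b) 2 + 2 * (if a = 2 then 1 else 0) * (if b = 2 then 1 else 0) = a * b := by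
  interval_cases a <;> interval_cases b <;> rfl

theorem sum_min_mul_two_add_eq {V W : Type*} [Fintype V] [Fintype W] {g : V → ℕ} {h : W → ℕ}
    (hg : ∀ v, g v ≤ 2) (hh : ∀ w, h w ≤ 2) :
    ∑ p : V × W, min (g p.1 * h p.2) 2 +
        2 * #{v | g v = 2} * #{w | h w = 2} = (∑ v, g v) * ∑ w, h w := by
  have hcount : 2 * #{v | g v = 2} * #{w | h w = 2} =
      ∑ p : V × W, 2 * (if g p.1 = 2 then 1 else 0) * (if h p.2 = 2 then 1 else 0) := by
    rw [card_filter, card_filter, Fintype.sum_prod_type, mul_assoc, Fintype.sum_mul_sum]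
    simp only [mul_sum, mul_assoc]
  rw [hcount, ← sum_add_distrib, Fintype.sum_mul_sum, Fintype.sum_prod_type]
  exact sum_congr rfl fun u _ => sum_congr rfl fun v _ => min_mul_two_add_eq_mul (hg u) (hh v)

theorem stmt_6_general {V W : Type*} [Fintype V] [Fintype W]
    (G : SimpleGraph V) (H : SimpleGraph W)
    (g : V → ℕ) (h : W → ℕ) (hg : IsTRDF G g) (hh : IsTRDF H h) :
    (trdn (dirProd G H) : ℤ) ≤ (∑ v, g v : ℤ) * (∑ w, h w : ℤ) -
      2 * ((Finset.univ.filter (fun v => g v = 2)).card : ℤ) *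
        ((Finset.univ.filter (fun w => h w = 2)).card : ℤ) := by
  have hweight := sum_min_mul_two_add_eq hg.1 hh.1
  have hle : trdn (dirProd G H) + 2 * #{v | g v = 2} * #{w | h w = 2} ≤
      (∑ v, g v) * ∑ w, h w :=
    hweight ▸ Nat.add_le_add_right (hg.dirProd hh).trdn_le_sum _
  rw [le_sub_iff_add_le]
  exact_mod_cast hle

theorem stmt_6 {V W : Type*} [Fintype V] [Fintype W] [DecidableEq V] [DecidableEq W]
    (G : SimpleGraph V) (H : SimpleGraph W)
    (hG : NoIsolated G) (hH : NoIsolated H)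
    (g : V → ℕ) (h : W → ℕ) (hg : IsTRDF G g) (hh : IsTRDF H h) :
    (trdn (dirProd G H) : ℤ) ≤ (∑ v, g v : ℤ) * (∑ w, h w : ℤ) -
      2 * ((Finset.univ.filter (fun v => g v = 2)).card : ℤ) *
        ((Finset.univ.filter (fun w => h w = 2)).card : ℤ) :=
  stmt_6_general G H g h hg hh
end
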